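/- arXiv:2603.19105 — 6 statements merged into one kernel-verified Lean document; each statement's English description precedes it below -/
import Mathlib

section
/- For a qubit, the distinguishability of the set of pure states {|ζ_x⟩}_{x=1}^N sampled from probability distribution {p_x} equals the distinguishability of the set of orthogonal complement states {|ζ_x^⊥⟩}_{x=1}^N sampled from the same distribution, where |ζ_x^⊥⟩ is the unique (up to phase) state orthogonal to |ζ_x⟩. -/
open Matrix BigOperators ComplexOrder

/-!
On `2 × 2` matrices the adjugate `A ↦ Tr A • 1 - A` is the congruence `A ↦ Y Aᵀ Yᴴ` with
`Y = !![0, -1; 1, 0]`. It is an involution that preserves positivity, sums and the identity,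
satisfies `Tr (adj A * adj B) = Tr (A * B)`, and sends the projector onto `ζ` to the projector onto
`ζ^⊥`. So `M ↦ adj ∘ M` is a bijection of POVMs turning the success probability for `{ζ_x}` into
that for `{ζ_x^⊥}`, and the two sets of achievable values coincide.
-/

namespace Matrix

section CommRing

variable {R : Type*} [CommRing R]

theorem adjugate_fin_two_eq_trace_smul_one_sub (A : Matrix (Fin 2) (Fin 2) R) :
    adjugate A = trace A • 1 - A := by
  ext i j
  fin_cases i <;> fin_cases j <;> simp [adjugate_fin_two, trace_fin_two]

theorem trace_adjugate_fin_two (A : Matrix (Fin 2) (Fin 2) R) : trace (adjugate A) = trace A := by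
  simp [adjugate_fin_two, trace_fin_two, add_comm]

theorem adjugate_sum_fin_two {ι : Type*} (s : Finset ι) (A : ι → Matrix (Fin 2) (Fin 2) R) :
    adjugate (∑ i ∈ s, A i) = ∑ i ∈ s, adjugate (A i) := by
  simp only [adjugate_fin_two_eq_trace_smul_one_sub, trace_sum, Finset.sum_smul,
    Finset.sum_sub_distrib]

theorem trace_adjugate_mul_adjugate_fin_two (A B : Matrix (Fin 2) (Fin 2) R) :
    trace (adjugate A * adjugate B) = trace (A * B) := by
  rw [← adjugate_mul_distrib, trace_adjugate_fin_two, trace_mul_comm]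

theorem adjugate_adjugate_fin_two (A : Matrix (Fin 2) (Fin 2) R) : adjugate (adjugate A) = A := by
  simp [adjugate_adjugate']

variable [StarRing R]

theorem adjugate_fin_two_eq_mul_transpose_mul (A : Matrix (Fin 2) (Fin 2) R) :
    adjugate A = !![0, -1; 1, 0] * Aᵀ * (!![0, -1; 1, 0])ᴴ := by
  ext i j
  fin_cases i <;> fin_cases j <;>
    simp [adjugate_fin_two, mul_apply, vecMul, dotProduct, Fin.sum_univ_two]

theorem PosSemidef.adjugate_fin_two [PartialOrder R] {A : Matrix (Fin 2) (Fin 2) R}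
    (hA : A.PosSemidef) : (adjugate A).PosSemidef := by
  rw [adjugate_fin_two_eq_mul_transpose_mul]
  exact hA.transpose.mul_mul_conjTranspose_same _

theorem sum_vecMulVec_star_eq_one {n : Type*} [Fintype n] [DecidableEq n] (v : n → n → R)
    (hv : ∀ i j, star (v i) ⬝ᵥ v j = (1 : Matrix n n R) i j) :
    ∑ i, vecMulVec (v i) (star (v i)) = 1 := by
  set A : Matrix n n R := of fun i => star (v i)
  have hAAH : A * Aᴴ = 1 := by
    ext i j
    simpa [A, mul_apply, dotProduct] using hv i j
  -- a square matrix with orthonormal rows also has orthonormal columns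
  rw [← mul_eq_one_comm.mp hAAH]
  ext k l
  simp [A, mul_apply, Matrix.sum_apply, vecMulVec_apply]

theorem vecMulVec_star_add_vecMulVec_star_eq_one {u v : Fin 2 → R}
    (hu : star u ⬝ᵥ u = 1) (hv : star v ⬝ᵥ v = 1) (huv : star u ⬝ᵥ v = 0) :
    vecMulVec u (star u) + vecMulVec v (star v) = 1 := by
  have hvu : star v ⬝ᵥ u = 0 := by rw [star_dotProduct, huv, star_zero]
  simpa using sum_vecMulVec_star_eq_one ![u, v] fun i j => by
    fin_cases i <;> fin_cases j <;> simp [hu, hv, huv, hvu]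

theorem vecMulVec_star_eq_adjugate {u v : Fin 2 → R}
    (hu : star u ⬝ᵥ u = 1) (hv : star v ⬝ᵥ v = 1) (huv : star u ⬝ᵥ v = 0) :
    vecMulVec v (star v) = adjugate (vecMulVec u (star u)) := by
  rw [adjugate_fin_two_eq_trace_smul_one_sub, trace_vecMulVec, dotProduct_comm, hu, one_smul,
    ← vecMulVec_star_add_vecMulVec_star_eq_one hu hv huv, add_sub_cancel_left]

end CommRing

theorem star_dotProduct_self_eq_sum_normSq {n : Type*} [Fintype n] (v : n → ℂ) :
    star v ⬝ᵥ v = ((∑ i, Complex.normSq (v i) : ℝ) : ℂ) := by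
  simp [dotProduct, Complex.normSq_eq_conj_mul_self]

end Matrix

section Discrimination

variable {ι n : Type*} [Fintype ι] [Fintype n] [DecidableEq n]

def successProbabilities (p : ι → ℝ) (ρ : ι → Matrix n n ℂ) : Set ℝ :=
  {s | ∃ M : ι → Matrix n n ℂ, (∀ x, (M x).PosSemidef) ∧ ∑ x, M x = 1 ∧
    s = ∑ x, p x * (ρ x * M x).trace.re}

theorem successProbabilities_subset_adjugate (p : ι → ℝ) (ρ : ι → Matrix (Fin 2) (Fin 2) ℂ) :
    successProbabilities p ρ ⊆ successProbabilities p fun x => adjugate (ρ x) := by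
  rintro s ⟨M, hM, hM1, rfl⟩
  refine ⟨fun x => adjugate (M x), fun x => (hM x).adjugate_fin_two, ?_, ?_⟩
  · rw [← adjugate_sum_fin_two, hM1, adjugate_one]
  · simp only [trace_adjugate_mul_adjugate_fin_two]

theorem successProbabilities_adjugate (p : ι → ℝ) (ρ : ι → Matrix (Fin 2) (Fin 2) ℂ) :
    successProbabilities p (fun x => adjugate (ρ x)) = successProbabilities p ρ := by
  refine subset_antisymm ?_ (successProbabilities_subset_adjugate p ρ)
  simpa only [adjugate_adjugate_fin_two] using
    successProbabilities_subset_adjugate p fun x => adjugate (ρ x)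

end Discrimination

theorem stmt2_general (N : ℕ)
    (ζ ζp : Fin N → Fin 2 → ℂ)
    (hζ : ∀ x, ∑ i, Complex.normSq (ζ x i) = 1)
    (hζp : ∀ x, ∑ i, Complex.normSq (ζp x i) = 1)
    (horth : ∀ x, ∑ i, (starRingEnd ℂ) (ζ x i) * ζp x i = 0)
    (p : Fin N → ℝ) :
    sSup {s : ℝ | ∃ M : Fin N → Matrix (Fin 2) (Fin 2) ℂ,
        (∀ x, (M x).PosSemidef) ∧ (∑ x, M x = 1) ∧
        s = ∑ x, p x * ((Matrix.vecMulVec (ζ x) (star (ζ x)) * M x).trace).re}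
    = sSup {s : ℝ | ∃ M : Fin N → Matrix (Fin 2) (Fin 2) ℂ,
        (∀ x, (M x).PosSemidef) ∧ (∑ x, M x = 1) ∧
        s = ∑ x, p x * ((Matrix.vecMulVec (ζp x) (star (ζp x)) * M x).trace).re} := by
  have hunit {v : Fin 2 → ℂ} (hv : ∑ i, Complex.normSq (v i) = 1) : star v ⬝ᵥ v = 1 := by
    rw [star_dotProduct_self_eq_sum_normSq, hv, Complex.ofReal_one]
  have hproj (x : Fin N) :
      vecMulVec (ζp x) (star (ζp x)) = adjugate (vecMulVec (ζ x) (star (ζ x))) :=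
    vecMulVec_star_eq_adjugate (hunit (hζ x)) (hunit (hζp x)) (horth x)
  change sSup (successProbabilities p _) = sSup (successProbabilities p _)
  simp only [hproj, successProbabilities_adjugate]

/-- For a qubit, the distinguishability (supremum over POVMs of the average guessing
probability) of the pure states `{|ζ_x⟩}` with prior `{p_x}` equals that of the
orthogonal-complement states `{|ζ_x^⊥⟩}` with the same prior. -/
theorem stmt2 (N : ℕ) (hN : 0 < N)
    (ζ ζp : Fin N → Fin 2 → ℂ)
    (hζ : ∀ x, ∑ i, Complex.normSq (ζ x i) = 1)
    (hζp : ∀ x, ∑ i, Complex.normSq (ζp x i) = 1)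
    (horth : ∀ x, ∑ i, (starRingEnd ℂ) (ζ x i) * ζp x i = 0)
    (p : Fin N → ℝ) (hp : ∀ x, 0 ≤ p x) (hp1 : ∑ x, p x = 1) :
    sSup {s : ℝ | ∃ M : Fin N → Matrix (Fin 2) (Fin 2) ℂ,
        (∀ x, (M x).PosSemidef) ∧ (∑ x, M x = 1) ∧
        s = ∑ x, p x * ((Matrix.vecMulVec (ζ x) (star (ζ x)) * M x).trace).re}
    = sSup {s : ℝ | ∃ M : Fin N → Matrix (Fin 2) (Fin 2) ℂ,
        (∀ x, (M x).PosSemidef) ∧ (∑ x, M x = 1) ∧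
        s = ∑ x, p x * ((Matrix.vecMulVec (ζp x) (star (ζp x)) * M x).trace).re} :=
  stmt2_general N ζ ζp hζ hζp horth p
end

section
/- For classical communication in the (n,2)-random access code with distinguishability constraint, the success probability S_C and classical distinguishability D_C satisfy n·S_C + 1 − n ≤ D_C. In particular, for n = 2, if S_C ≥ (1/2)(1 + 1/√2) then D_C ≥ 1/√2, and for n = 3, if S_C ≥ (1/2)(1 + 1/√3) then D_C ≥ 3·(1/2)(1+1/√3) − 2 = √3/2 − 1/2. -/
open BigOperators

/-- Weierstrass-type inequality: `∑ p i - (|s| - 1) ≤ ∏ p i` for `p i ∈ [0,1]`. -/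
lemma sum_sub_card_le_prod {ι : Type*} (s : Finset ι) (p : ι → ℝ)
    (h0 : ∀ i ∈ s, 0 ≤ p i) (h1 : ∀ i ∈ s, p i ≤ 1) :
    (∑ i ∈ s, p i) - ((s.card : ℝ) - 1) ≤ ∏ i ∈ s, p i := by
  classical
  induction s using Finset.induction_on with
  | empty => simp
  | @insert a s ha ih =>
    have h0' : ∀ i ∈ s, 0 ≤ p i := fun i hi => h0 i (Finset.mem_insert_of_mem hi)
    have h1' : ∀ i ∈ s, p i ≤ 1 := fun i hi => h1 i (Finset.mem_insert_of_mem hi)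
    have hIH := ih h0' h1'
    have hpa0 : 0 ≤ p a := h0 a (Finset.mem_insert_self a s)
    have hpa1 : p a ≤ 1 := h1 a (Finset.mem_insert_self a s)
    have hprod0 : 0 ≤ ∏ i ∈ s, p i := Finset.prod_nonneg h0'
    have hsum_le : ∑ i ∈ s, p i ≤ (s.card : ℝ) := by
      calc ∑ i ∈ s, p i ≤ ∑ _i ∈ s, (1 : ℝ) := Finset.sum_le_sum h1'
        _ = s.card := by simp
    rw [Finset.sum_insert ha, Finset.prod_insert ha, Finset.card_insert_of_notMem ha]
    push_cast
    nlinarith [mul_le_mul_of_nonneg_left hIH hpa0]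

/-- For the `(n,2)`-random access code with classical communication:
`n·S_C + 1 − n ≤ D_C`; in particular, for `n = 2`, `S_C ≥ (1/2)(1+1/√2)` forces
`D_C ≥ 1/√2`, and for `n = 3`, `S_C ≥ (1/2)(1+1/√3)` forces `D_C ≥ √3/2 − 1/2`. -/
theorem stmt6 (n : ℕ) (hn : 0 < n) (M : Type*) [Fintype M]
    (pe : M → (Fin n → Fin 2) → ℝ) (hpe0 : ∀ m x, 0 ≤ pe m x)
    (hpe1 : ∀ x, ∑ m, pe m x = 1)
    (pd : Fin 2 → Fin n → M → ℝ) (hpd0 : ∀ z y m, 0 ≤ pd z y m)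
    (hpd1 : ∀ y m, ∑ z, pd z y m = 1)
    (S D : ℝ)
    (hS : S = (1 / (n * 2 ^ n) : ℝ) *
        ∑ x : Fin n → Fin 2, ∑ y : Fin n, ∑ m, pe m x * pd (x y) y m)
    (hD : D = (1 / 2 ^ n : ℝ) *
        ∑ m, Finset.univ.sup' Finset.univ_nonempty fun x : Fin n → Fin 2 => pe m x) :
    (n : ℝ) * S + 1 - n ≤ D
    ∧ (n = 2 → S ≥ (1 / 2) * (1 + 1 / Real.sqrt 2) → D ≥ 1 / Real.sqrt 2)
    ∧ (n = 3 → S ≥ (1 / 2) * (1 + 1 / Real.sqrt 3) →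
        D ≥ Real.sqrt 3 / 2 - 1 / 2) := by
  have h2n : (0:ℝ) < 2 ^ n := by positivity
  have hnR : (0:ℝ) < n := by exact_mod_cast hn
  set Mm : M → ℝ := fun m =>
    Finset.univ.sup' Finset.univ_nonempty fun x : Fin n → Fin 2 => pe m x with hMm
  have hMle : ∀ m x, pe m x ≤ Mm m := fun m x => Finset.le_sup' _ (Finset.mem_univ x)
  have hpd_le : ∀ (z : Fin 2) (y : Fin n) (m : M), pd z y m ≤ 1 := by
    intro z y m
    calc pd z y m ≤ ∑ z', pd z' y m :=
          Finset.single_le_sum (fun i _ => hpd0 i y m) (Finset.mem_univ z)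
      _ = 1 := hpd1 y m
  -- pointwise bound: ∑_y pd (x y) y m ≤ (n-1) + ∏_y pd (x y) y m
  have inner : ∀ (m : M) (x : Fin n → Fin 2),
      ∑ y, pe m x * pd (x y) y m
        ≤ pe m x * ((n:ℝ) - 1) + Mm m * ∏ y, pd (x y) y m := by
    intro m x
    have hW := sum_sub_card_le_prod Finset.univ (fun y => pd (x y) y m)
      (fun y _ => hpd0 _ y m) (fun y _ => hpd_le _ y m)
    simp only [Finset.card_univ, Fintype.card_fin] at hW
    have hpex := hpe0 m x
    have hprod0 : 0 ≤ ∏ y, pd (x y) y m := Finset.prod_nonneg fun y _ => hpd0 _ y m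
    have hMx : pe m x ≤ Mm m := hMle m x
    rw [← Finset.mul_sum]
    nlinarith [mul_le_mul_of_nonneg_left hW hpex,
      mul_le_mul_of_nonneg_right hMx hprod0]
  -- total product sum is 1
  have hprodsum : ∀ m : M, ∑ x : Fin n → Fin 2, ∏ y, pd (x y) y m = 1 := by
    intro m
    have := (Fintype.prod_sum (fun (y : Fin n) (z : Fin 2) => pd z y m)).symm
    rw [this]
    simp [hpd1]
  -- key bound
  have key : (n : ℝ) * S + 1 - n ≤ D := by
    have hswap : ∑ x : Fin n → Fin 2, ∑ y : Fin n, ∑ m, pe m x * pd (x y) y m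
        = ∑ m, ∑ x : Fin n → Fin 2, ∑ y : Fin n, pe m x * pd (x y) y m := by
      rw [show (∑ x : Fin n → Fin 2, ∑ y : Fin n, ∑ m, pe m x * pd (x y) y m)
          = ∑ x : Fin n → Fin 2, ∑ m, ∑ y : Fin n, pe m x * pd (x y) y m from
        Finset.sum_congr rfl fun x _ => Finset.sum_comm]
      exact Finset.sum_comm
    have hbound : ∑ m, ∑ x : Fin n → Fin 2, ∑ y : Fin n, pe m x * pd (x y) y m
        ≤ ((n:ℝ) - 1) * 2 ^ n + ∑ m, Mm m := by
      calc ∑ m, ∑ x : Fin n → Fin 2, ∑ y : Fin n, pe m x * pd (x y) y m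
          ≤ ∑ m, ∑ x : Fin n → Fin 2,
              (pe m x * ((n:ℝ) - 1) + Mm m * ∏ y, pd (x y) y m) :=
            Finset.sum_le_sum fun m _ => Finset.sum_le_sum fun x _ => inner m x
        _ = ∑ m, (((n:ℝ) - 1) * ∑ x : Fin n → Fin 2, pe m x + Mm m) := by
            refine Finset.sum_congr rfl fun m _ => ?_
            rw [Finset.sum_add_distrib, ← Finset.sum_mul, ← Finset.mul_sum,
              hprodsum m]
            ring
        _ = ((n:ℝ) - 1) * (∑ m, ∑ x : Fin n → Fin 2, pe m x) + ∑ m, Mm m := by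
            rw [Finset.sum_add_distrib, Finset.mul_sum]
        _ = ((n:ℝ) - 1) * 2 ^ n + ∑ m, Mm m := by
            rw [Finset.sum_comm]
            simp [hpe1]
    rw [hS, hD, hswap]
    have hnS : (n:ℝ) * ((1 / ((n:ℝ) * 2 ^ n)) *
        ∑ m, ∑ x : Fin n → Fin 2, ∑ y : Fin n, pe m x * pd (x y) y m)
        = (1 / (2:ℝ) ^ n) * ∑ m, ∑ x : Fin n → Fin 2, ∑ y : Fin n, pe m x * pd (x y) y m := by
      field_simp
    rw [hnS]
    have := mul_le_mul_of_nonneg_left hbound (le_of_lt (by positivity : (0:ℝ) < 1 / 2 ^ n))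
    have hsimp : (1 / (2:ℝ) ^ n) * (((n:ℝ) - 1) * 2 ^ n + ∑ m, Mm m)
        = ((n:ℝ) - 1) + (1 / (2:ℝ) ^ n) * ∑ m, Mm m := by
      field_simp
    rw [hsimp] at this
    linarith
  refine ⟨key, ?_, ?_⟩
  · intro hn2 hS2
    have h2 : (0:ℝ) < Real.sqrt 2 := Real.sqrt_pos.mpr (by norm_num)
    subst hn2
    push_cast at key
    linarith
  · intro hn3 hS3
    have h3 : (0:ℝ) < Real.sqrt 3 := Real.sqrt_pos.mpr (by norm_num)
    have h3' : Real.sqrt 3 * Real.sqrt 3 = 3 := Real.mul_self_sqrt (by norm_num)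
    have hinv : 1 / Real.sqrt 3 = Real.sqrt 3 / 3 := by
      rw [div_eq_div_iff (ne_of_gt h3) (by norm_num : (3:ℝ) ≠ 0)]
      linarith [h3']
    rw [hinv] at hS3
    subst hn3
    push_cast at key
    linarith
end

section
/- In the pair-distinguishability task with N inputs, classical communication satisfies (N−1)(S_C − 1) + 1 ≤ D_C, where S_C = (1/(N(N−1))) Σ_{x<x'} [ p(x|x,(x,x')) + p(x'|x',(x,x')) ] with p(z|x,y) = Σ_m p_e(m|x) p_d(z|y,m), and D_C = (1/N) Σ_m max_x p_e(m|x). -/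
/-!
For a pair `x < x'` and a message `m`, Bob's joint success weight
`pe m x * pd x (x, x') m + pe m x' * pd x' (x, x') m` is at most
`max (pe m x) (pe m x') = pe m x + pe m x' - min (pe m x) (pe m x')`, since Bob's two answers
have total probability at most one. Pairing every input with a maximiser of `pe m`
shows that the minima over all pairs add up to at least `∑ x, pe m x - max_x pe m x`.
Summing over `m`, the total success is at most `N (N - 1) - N + ∑ m, max_x pe m x`,
which rearranges to the claim.
-/

open Finset

section PairSums

variable {ι R : Type*} [Fintype ι] [LinearOrder ι]

lemma card_filter_fst_lt_snd :
    (#{q : ι × ι | q.1 < q.2} : ℝ) = Fintype.card ι * (Fintype.card ι - 1) / 2 := by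
  rw [← univ_product_univ, card_product_filter_lt, Nat.cast_choose_two, card_univ]

variable [AddCommGroup R] [LinearOrder R] [IsOrderedAddMonoid R]

lemma sum_sub_sup'_le_sum_pair_min [Nonempty ι] {a : ι → R} (ha : 0 ≤ a) :
    ∑ x, a x - univ.sup' univ_nonempty a ≤ ∑ q : ι × ι with q.1 < q.2, min (a q.1) (a q.2) := by
  obtain ⟨x₀, -, hx₀⟩ := exists_mem_eq_sup' univ_nonempty a
  have hle (x : ι) : a x ≤ a x₀ := hx₀ ▸ le_sup' a (mem_univ x)
  -- each `x ≠ x₀` is the smaller-valued member of the pair `{x, x₀}`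
  set e : ι → ι × ι := fun x => (min x x₀, max x x₀)
  have he_min (x : ι) : min (a (e x).1) (a (e x).2) = a x := by
    rcases le_total x x₀ with h | h <;> simp [e, h, hle x]
  have he_inj : Set.InjOn e (univ.erase x₀) := by
    intro x hx y hy hxy
    simp only [coe_erase, coe_univ, Set.mem_sdiff, Set.mem_univ, Set.mem_singleton_iff,
      true_and] at hx hy
    simp only [e, Prod.mk.injEq] at hxy
    rcases lt_or_gt_of_ne hx with h | h <;> rcases lt_or_gt_of_ne hy with h' | h' <;>
      simp_all [le_of_lt]
  have he_mem : (univ.erase x₀).image e ⊆ univ.filter fun q : ι × ι => q.1 < q.2 := by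
    simp only [subset_iff, mem_image, mem_erase, mem_univ, and_true, mem_filter, true_and,
      forall_exists_index, and_imp]
    rintro _ x hx rfl
    exact min_lt_max.2 hx
  calc ∑ x, a x - univ.sup' univ_nonempty a = ∑ x ∈ univ.erase x₀, a x := by
        rw [hx₀, sum_erase_eq_sub (mem_univ x₀)]
    _ = ∑ q ∈ (univ.erase x₀).image e, min (a q.1) (a q.2) := by
        rw [sum_image he_inj]; exact sum_congr rfl fun x _ => (he_min x).symm
    _ ≤ _ := sum_le_sum_of_subset_of_nonneg he_mem fun q _ _ => le_min (ha _) (ha _)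

end PairSums

lemma mul_add_mul_le_max {R : Type*} [Ring R] [LinearOrder R] [IsStrictOrderedRing R]
    {a b p q : R} (ha : 0 ≤ a) (hp : 0 ≤ p) (hq : 0 ≤ q) (hpq : p + q ≤ 1) :
    a * p + b * q ≤ max a b :=
  calc a * p + b * q ≤ max a b * p + max a b * q := by
          gcongr
          · exact le_max_left a b
          · exact le_max_right a b
    _ = max a b * (p + q) := (mul_add _ _ _).symm
    _ ≤ max a b := mul_le_of_le_one_right (le_max_of_le_left ha) hpq

lemma sum_pair_success_le_sum_sup' {ι M : Type*} [Fintype ι] [LinearOrder ι] [Nonempty ι]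
    [Fintype M] (pe : M → ι → ℝ) (hpe0 : ∀ m x, 0 ≤ pe m x) (hpe1 : ∀ x, ∑ m, pe m x = 1)
    (pd : ι → ι × ι → M → ℝ) (hpd0 : ∀ z y m, 0 ≤ pd z y m) (hpd1 : ∀ y m, ∑ z, pd z y m = 1) :
    ∑ q ∈ univ.filter (fun q : ι × ι => q.1 < q.2),
        ((∑ m, pe m q.1 * pd q.1 q m) + (∑ m, pe m q.2 * pd q.2 q m)) ≤
      ∑ m, univ.sup' univ_nonempty (pe m) + Fintype.card ι * (Fintype.card ι - 2) := by
  set n : ℝ := (Fintype.card ι : ℝ)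
  set P := univ.filter (fun q : ι × ι => q.1 < q.2)
  have hdecode {q : ι × ι} (hq : q ∈ P) (m : M) : pd q.1 q m + pd q.2 q m ≤ 1 :=
    hpd1 q m ▸ add_le_sum (fun z _ => hpd0 z q m) (mem_univ _) (mem_univ _)
      (mem_filter.1 hq).2.ne
  calc ∑ q ∈ P, ((∑ m, pe m q.1 * pd q.1 q m) + (∑ m, pe m q.2 * pd q.2 q m))
      ≤ ∑ q ∈ P, ∑ m, max (pe m q.1) (pe m q.2) := by
        refine sum_le_sum fun q hq => ?_
        rw [← sum_add_distrib]
        exact sum_le_sum fun m _ =>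
          mul_add_mul_le_max (hpe0 _ _) (hpd0 _ _ _) (hpd0 _ _ _) (hdecode hq m)
    _ = ∑ q ∈ P, ∑ m, (pe m q.1 + pe m q.2) - ∑ m, ∑ q ∈ P, min (pe m q.1) (pe m q.2) := by
        rw [sum_comm (s := univ), ← sum_sub_distrib]
        refine sum_congr rfl fun q _ => ?_
        rw [← sum_sub_distrib]
        exact sum_congr rfl fun m _ => by rw [← min_add_max]; ring
    _ = n * (n - 1) - ∑ m, ∑ q ∈ P, min (pe m q.1) (pe m q.2) := by
        simp only [sum_add_distrib, hpe1, sum_const, nsmul_eq_mul]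
        rw [card_filter_fst_lt_snd]
        ring
    _ ≤ n * (n - 1) - ∑ m, (∑ x, pe m x - univ.sup' univ_nonempty (pe m)) := by
        gcongr with m
        exact sum_sub_sup'_le_sum_pair_min (hpe0 m)
    _ = ∑ m, univ.sup' univ_nonempty (pe m) + n * (n - 2) := by
        rw [sum_sub_distrib, sum_comm]
        simp only [hpe1, sum_const, card_univ, nsmul_eq_mul, mul_one]
        ring

/-- Pair-distinguishability task with `N` inputs: classical communication satisfies
`(N−1)(S_C − 1) + 1 ≤ D_C`. -/
theorem stmt8 (N : ℕ) (hN : 2 ≤ N) [NeZero N] (M : Type*) [Fintype M]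
    (pe : M → Fin N → ℝ) (hpe0 : ∀ m x, 0 ≤ pe m x)
    (hpe1 : ∀ x, ∑ m, pe m x = 1)
    (pd : Fin N → (Fin N × Fin N) → M → ℝ) (hpd0 : ∀ z y m, 0 ≤ pd z y m)
    (hpd1 : ∀ y m, ∑ z, pd z y m = 1)
    (S D : ℝ)
    (hS : S = (1 / (N * (N - 1)) : ℝ) *
        ∑ q ∈ Finset.univ.filter (fun q : Fin N × Fin N => q.1 < q.2),
          ((∑ m, pe m q.1 * pd q.1 q m) + (∑ m, pe m q.2 * pd q.2 q m)))
    (hD : D = (1 / N : ℝ) * ∑ m, Finset.univ.sup' Finset.univ_nonempty fun x => pe m x) :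
    ((N : ℝ) - 1) * (S - 1) + 1 ≤ D := by
  have key := sum_pair_success_le_sum_sup' pe hpe0 hpe1 pd hpd0 hpd1
  rw [Fintype.card_fin] at key
  have hN1 : (N : ℝ) - 1 ≠ 0 := by
    have : (2 : ℝ) ≤ N := by exact_mod_cast hN
    linarith
  subst hS hD
  set T := ∑ q ∈ univ.filter (fun q : Fin N × Fin N => q.1 < q.2),
    ((∑ m, pe m q.1 * pd q.1 q m) + (∑ m, pe m q.2 * pd q.2 q m))
  set G := ∑ m, univ.sup' univ_nonempty (pe m)
  calc ((N : ℝ) - 1) * (1 / (N * (N - 1)) * T - 1) + 1 = (T - N * (N - 2)) / N := by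
        field_simp
        ring
    _ ≤ G / N := by gcongr; linarith
    _ = 1 / N * G := by ring
end

section
/- In the (3,1,3) scenario (three inputs for Alice, Bob has one fixed input and three outputs), any classical strategy satisfies the facet inequality p(2|1) + p(1|3) + p(3|1) ≤ 3D, where p(z|x) = Σ_m p_e(m|x) p_d(z|m) and D = (1/3) Σ_m max_{x∈{1,2,3}} p_e(m|x). -/
/-!
Reading Bob's outputs `z = 2, 1, 3` as guesses of Alice's inputs `x = 1, 3, 1`, the left-hand
side is the success probability of a guessing decoder. For each message `m`, the decoder's
contribution is an average of values `p_e(m|x)` weighted by `p_d(·|m)`, hence at most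
`max_x p_e(m|x)`; summing over `m` gives `3D`.
-/

open Finset

lemma Finset.sum_mul_le_of_le_of_sum_eq_one {ι : Type*} [Fintype ι] (f q : ι → ℝ) {s : ℝ}
    (hq0 : ∀ i, 0 ≤ q i) (hq1 : ∑ i, q i = 1) (hf : ∀ i, f i ≤ s) :
    ∑ i, f i * q i ≤ s :=
  calc ∑ i, f i * q i ≤ ∑ i, s * q i :=
        sum_le_sum fun i _ => mul_le_mul_of_nonneg_right (hf i) (hq0 i)
    _ = s := by rw [← mul_sum, hq1, mul_one]

lemma sum_guess_le_sum_sup' {M X Z : Type*} [Fintype M] [Fintype X] [Nonempty X] [Fintype Z]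
    (pe : M → X → ℝ) (pd : Z → M → ℝ) (hpd0 : ∀ z m, 0 ≤ pd z m)
    (hpd1 : ∀ m, ∑ z, pd z m = 1) (guess : Z → X) :
    ∑ z, ∑ m, pe m (guess z) * pd z m ≤ ∑ m, univ.sup' univ_nonempty (pe m) := by
  rw [sum_comm]
  exact sum_le_sum fun m _ =>
    sum_mul_le_of_le_of_sum_eq_one _ _ (hpd0 · m) (hpd1 m)
      fun z => le_sup' (pe m) (mem_univ (guess z))

-- Inputs and outputs `1, 2, 3` are indexed by `0, 1, 2`.
theorem stmt10_general (M : Type*) [Fintype M]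
    (pe : M → Fin 3 → ℝ)
    (pd : Fin 3 → M → ℝ) (hpd0 : ∀ z m, 0 ≤ pd z m)
    (hpd1 : ∀ m, ∑ z, pd z m = 1)
    (p : Fin 3 → Fin 3 → ℝ)
    (hp : ∀ z x, p z x = ∑ m, pe m x * pd z m)
    (D : ℝ)
    (hD : D = (1 / 3 : ℝ) * ∑ m, Finset.univ.sup' Finset.univ_nonempty fun x => pe m x) :
    p 1 0 + p 0 2 + p 2 0 ≤ 3 * D := by
  have hguess := sum_guess_le_sum_sup' pe pd hpd0 hpd1 ![2, 0, 0]
  simp only [Fin.sum_univ_three, Matrix.cons_val, ← hp] at hguess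
  rw [hD]
  linarith

/-- (3,1,3) scenario: with Alice's inputs `x ∈ {1,2,3}` (here `0,1,2`) and Bob's outputs
`z ∈ {1,2,3}` (here `0,1,2`), any classical strategy obeys the facet inequality
`p(2|1) + p(1|3) + p(3|1) ≤ 3D`. -/
theorem stmt10 (M : Type*) [Fintype M]
    (pe : M → Fin 3 → ℝ) (hpe0 : ∀ m x, 0 ≤ pe m x)
    (hpe1 : ∀ x, ∑ m, pe m x = 1)
    (pd : Fin 3 → M → ℝ) (hpd0 : ∀ z m, 0 ≤ pd z m)
    (hpd1 : ∀ m, ∑ z, pd z m = 1)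
    (p : Fin 3 → Fin 3 → ℝ)
    (hp : ∀ z x, p z x = ∑ m, pe m x * pd z m)
    (D : ℝ)
    (hD : D = (1 / 3 : ℝ) * ∑ m, Finset.univ.sup' Finset.univ_nonempty fun x => pe m x) :
    p 1 0 + p 0 2 + p 2 0 ≤ 3 * D :=
  stmt10_general M pe pd hpd0 hpd1 p hp D hD
end

section
/- If each of N quantum channels E_x : ℂ^d → ℂ^d is unitary (E_x(ρ) = U_x ρ U_x†), and the inputs x are uniform, then the entanglement-assisted distinguishability D_EAQC = max over bipartite states ρ_AB on ℂ^d ⊗ ℂ^{d'} and POVMs {T_x} of (1/N) Σ_x Tr[(U_x ⊗ I)ρ_AB(U_x† ⊗ I) T_x] satisfies D_EAQC ≤ d²/N. -/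
/-!
Every bipartite state satisfies the operator inequality `ρ ≤ d • (1 ⊗ₖ Tr_A ρ)`: writing
`ρ = C† C` and splitting `C = ∑ₖ C Pₖ` along the `d` diagonal blocks `Pₖ = Eₖₖ ⊗ 1` of the first
factor, the operator Cauchy–Schwarz inequality gives `ρ ≤ d • ∑ₖ Pₖ ρ Pₖ`, and each block
`Pₖ ρ Pₖ = Eₖₖ ⊗ ρₖₖ` lies below `1 ⊗ ρₖₖ`. A local unitary `U ⊗ 1` does not change `Tr_A ρ`, so
all `N` states `(U_x ⊗ 1) ρ (U_x ⊗ 1)†` lie below the same operator `B = d • (1 ⊗ₖ Tr_A ρ)`, and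
for any POVM `∑ₓ Tr (σₓ Tₓ) ≤ Tr B = d²`.
-/

open Matrix BigOperators ComplexOrder Kronecker
open scoped MatrixOrder

namespace Matrix

variable {R 𝕜 : Type*} [RCLike 𝕜] {m n : Type*}

theorem sum_kronecker [NonUnitalNonAssocSemiring R] {ι l p q r : Type*} (s : Finset ι)
    (A : ι → Matrix l p R) (B : Matrix q r R) :
    (∑ i ∈ s, A i) ⊗ₖ B = ∑ i ∈ s, A i ⊗ₖ B := by
  ext
  simp [sum_apply, Finset.sum_mul]

theorem kronecker_sum [NonUnitalNonAssocSemiring R] {ι l p q r : Type*} (s : Finset ι)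
    (A : Matrix l p R) (B : ι → Matrix q r R) :
    A ⊗ₖ ∑ i ∈ s, B i = ∑ i ∈ s, A ⊗ₖ B i := by
  ext
  simp [sum_apply, Finset.mul_sum]

theorem single_le_one [DecidableEq m] (k : m) : single k k (1 : 𝕜) ≤ 1 := by
  have h : (1 : Matrix m m 𝕜) - single k k 1 = diagonal fun i => if i = k then 0 else 1 := by
    ext i j
    simp only [sub_apply, one_apply, single_apply, diagonal_apply]
    grind
  rw [le_iff, h]
  exact PosSemidef.diagonal fun i => by dsimp; split_ifs <;> simp

theorem conjTranspose_sum_mul_sum_le_card_nsmul [Fintype n] {ι : Type*} (s : Finset ι)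
    (A : ι → Matrix n n 𝕜) :
    (∑ i ∈ s, A i)ᴴ * ∑ i ∈ s, A i ≤ s.card • ∑ i ∈ s, (A i)ᴴ * A i := by
  have hsq : (∑ i ∈ s, ∑ j ∈ s, (A i - A j)ᴴ * (A i - A j)).PosSemidef :=
    posSemidef_sum _ fun i _ => posSemidef_sum _ fun j _ => posSemidef_conjTranspose_mul_self _
  have hexpand : ∑ i ∈ s, ∑ j ∈ s, (A i - A j)ᴴ * (A i - A j)
      = (2 : 𝕜) • (s.card • ∑ i ∈ s, (A i)ᴴ * A i - (∑ i ∈ s, A i)ᴴ * ∑ i ∈ s, A i) := by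
    simp only [conjTranspose_sub, sub_mul, mul_sub, Finset.sum_sub_distrib, conjTranspose_sum,
      Finset.sum_mul, Finset.mul_sum, Finset.sum_const, two_smul]
    rw [Finset.smul_sum, Finset.sum_comm (f := fun i j => (A i)ᴴ * A j)]
    abel
  have := hsq.smul (a := (2 : 𝕜)⁻¹) (by positivity)
  rwa [hexpand, smul_smul, inv_mul_cancel₀ two_ne_zero, one_smul] at this

section Kronecker

variable [Fintype m] [Fintype n]

theorem trace_one_kronecker [CommSemiring R] [DecidableEq m] (A : Matrix n n R) :
    ((1 : Matrix m m R) ⊗ₖ A).trace = Fintype.card m * A.trace := by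
  rw [trace_kronecker, trace_one]

theorem kronecker_le_kronecker_left {A B : Matrix m m 𝕜} {C : Matrix n n 𝕜} (hAB : A ≤ B)
    (hC : C.PosSemidef) : A ⊗ₖ C ≤ B ⊗ₖ C := by
  rw [le_iff] at hAB ⊢
  convert hAB.kronecker hC using 1
  ext
  simp [sub_mul]

theorem single_kronecker_one_mul_mul_single_kronecker_one [DecidableEq m] [DecidableEq n] (k : m)
    (M : Matrix (m × n) (m × n) 𝕜) :
    (single k k 1 ⊗ₖ 1) * M * (single k k 1 ⊗ₖ 1)
      = single k k 1 ⊗ₖ M.submatrix (k, ·) (k, ·) := by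
  ext ⟨i, j⟩ ⟨i', j'⟩
  rcases eq_or_ne k i with rfl | hi <;> rcases eq_or_ne k i' with rfl | hi' <;>
    simp [mul_apply, Fintype.sum_prod_type, single_apply, one_apply, *]

end Kronecker

section PartialTrace

variable [Fintype m]

def partialTraceLeft [AddCommMonoid R] (M : Matrix (m × n) (m × n) R) : Matrix n n R :=
  ∑ i, M.submatrix (i, ·) (i, ·)

@[simp]
theorem partialTraceLeft_apply [AddCommMonoid R] (M : Matrix (m × n) (m × n) R) (j j' : n) :
    partialTraceLeft M j j' = ∑ i, M (i, j) (i, j') := by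
  simp [partialTraceLeft, sum_apply]

variable [Fintype n]

theorem trace_partialTraceLeft [AddCommMonoid R] (M : Matrix (m × n) (m × n) R) :
    (partialTraceLeft M).trace = M.trace := by
  simp only [trace, diag, partialTraceLeft_apply, Fintype.sum_prod_type]
  exact Finset.sum_comm

theorem partialTraceLeft_kronecker_one_mul_comm [CommSemiring R] [DecidableEq n]
    (A : Matrix m m R) (M : Matrix (m × n) (m × n) R) :
    partialTraceLeft ((A ⊗ₖ 1) * M) = partialTraceLeft (M * (A ⊗ₖ 1)) := by
  ext j j'
  simp only [partialTraceLeft_apply, mul_apply, Fintype.sum_prod_type, kronecker_apply, one_apply,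
    mul_ite, ite_mul, mul_one, mul_zero, zero_mul, Finset.sum_ite_eq, Finset.sum_ite_eq',
    Finset.mem_univ, if_true]
  rw [Finset.sum_comm]
  exact Finset.sum_congr rfl fun _ _ => Finset.sum_congr rfl fun _ _ => mul_comm _ _

theorem partialTraceLeft_conj_kronecker_one [CommSemiring R] [StarRing R] [DecidableEq m]
    [DecidableEq n] {U : Matrix m m R} (hU : Uᴴ * U = 1) (M : Matrix (m × n) (m × n) R) :
    partialTraceLeft ((U ⊗ₖ 1) * M * (Uᴴ ⊗ₖ 1)) = partialTraceLeft M := by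
  rw [Matrix.mul_assoc, partialTraceLeft_kronecker_one_mul_comm, Matrix.mul_assoc,
    ← mul_kronecker_mul, hU, Matrix.mul_one, one_kronecker_one, Matrix.mul_one]

variable [DecidableEq m] [DecidableEq n]

theorem le_card_nsmul_sum_single_kronecker_one_conj {ρ : Matrix (m × n) (m × n) 𝕜}
    (hρ : ρ.PosSemidef) :
    ρ ≤ Fintype.card m • ∑ k, (single k k 1 ⊗ₖ 1) * ρ * (single k k 1 ⊗ₖ 1) := by
  obtain ⟨C, rfl⟩ := CStarAlgebra.nonneg_iff_eq_star_mul_self.mp hρ.nonneg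
  set P : m → Matrix (m × n) (m × n) 𝕜 := fun k => single k k 1 ⊗ₖ 1
  have hPsum : ∑ k, P k = 1 := by rw [← sum_kronecker, sum_single_one, one_kronecker_one]
  have hPself : ∀ k, (P k)ᴴ = P k := fun k => by
    simp [P, conjTranspose_kronecker, conjTranspose_single]
  have := conjTranspose_sum_mul_sum_le_card_nsmul Finset.univ fun k => C * P k
  simpa [← Matrix.mul_sum, hPsum, conjTranspose_mul, hPself, Matrix.mul_assoc,
    star_eq_conjTranspose] using this

theorem sum_single_kronecker_one_conj_le {ρ : Matrix (m × n) (m × n) 𝕜} (hρ : ρ.PosSemidef) :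
    ∑ k, (single k k 1 ⊗ₖ 1) * ρ * (single k k 1 ⊗ₖ 1) ≤ 1 ⊗ₖ partialTraceLeft ρ := by
  simp only [single_kronecker_one_mul_mul_single_kronecker_one, partialTraceLeft, kronecker_sum]
  exact Finset.sum_le_sum fun k _ => kronecker_le_kronecker_left (single_le_one k) (hρ.submatrix _)

theorem le_card_nsmul_one_kronecker_partialTraceLeft {ρ : Matrix (m × n) (m × n) 𝕜}
    (hρ : ρ.PosSemidef) : ρ ≤ Fintype.card m • (1 ⊗ₖ partialTraceLeft ρ) :=
  (le_card_nsmul_sum_single_kronecker_one_conj hρ).trans <|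
    nsmul_le_nsmul_right (sum_single_kronecker_one_conj_le hρ) _

end PartialTrace

section Trace

variable [Fintype n]

theorem PosSemidef.trace_mul_nonneg {A B : Matrix n n 𝕜} (hA : A.PosSemidef) (hB : B.PosSemidef) :
    0 ≤ (A * B).trace := by
  classical
  obtain ⟨C, rfl⟩ := CStarAlgebra.nonneg_iff_eq_star_mul_self.mp hB.nonneg
  rw [← Matrix.mul_assoc, trace_mul_cycle, star_eq_conjTranspose]
  exact (hA.mul_mul_conjTranspose_same C).trace_nonneg

theorem trace_mul_le_trace_mul_of_le {A B T : Matrix n n 𝕜} (hAB : A ≤ B) (hT : T.PosSemidef) :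
    (A * T).trace ≤ (B * T).trace := by
  rw [← sub_nonneg, ← trace_sub, ← Matrix.sub_mul]
  exact hAB.trace_mul_nonneg hT

theorem sum_trace_mul_le_trace_of_forall_le [DecidableEq n] {ι : Type*} [Fintype ι]
    {σ T : ι → Matrix n n 𝕜} {B : Matrix n n 𝕜} (hσ : ∀ x, σ x ≤ B)
    (hT : ∀ x, (T x).PosSemidef) (hTsum : ∑ x, T x = 1) :
    ∑ x, (σ x * T x).trace ≤ B.trace :=
  calc ∑ x, (σ x * T x).trace
      ≤ ∑ x, (B * T x).trace :=
        Finset.sum_le_sum fun x _ => trace_mul_le_trace_mul_of_le (hσ x) (hT x)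
    _ = B.trace := by rw [← trace_sum, ← Matrix.mul_sum, hTsum, Matrix.mul_one]

end Trace

end Matrix

theorem stmt14_general (d d' N : ℕ)
    (U : Fin N → Matrix (Fin d) (Fin d) ℂ)
    (hU : ∀ x, U x ∈ Matrix.unitaryGroup (Fin d) ℂ)
    (ρ : Matrix (Fin d × Fin d') (Fin d × Fin d') ℂ)
    (hρpsd : ρ.PosSemidef) (hρtr : ρ.trace = 1)
    (T : Fin N → Matrix (Fin d × Fin d') (Fin d × Fin d') ℂ)
    (hTpsd : ∀ x, (T x).PosSemidef) (hTsum : ∑ x, T x = 1) :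
    (1 / N : ℝ) * ∑ x,
      ((((U x ⊗ₖ (1 : Matrix (Fin d') (Fin d') ℂ)) * ρ *
          ((U x)ᴴ ⊗ₖ (1 : Matrix (Fin d') (Fin d') ℂ))) * T x).trace).re
      ≤ (d : ℝ) ^ 2 / N := by
  set B := d • ((1 : Matrix (Fin d) (Fin d) ℂ) ⊗ₖ partialTraceLeft ρ)
  have hB : ∀ x, (U x ⊗ₖ 1) * ρ * ((U x)ᴴ ⊗ₖ 1) ≤ B := fun x => by
    have hUx : (U x)ᴴ * U x = 1 := mem_unitaryGroup_iff'.mp (hU x)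
    have hconj := hρpsd.mul_mul_conjTranspose_same (U x ⊗ₖ (1 : Matrix (Fin d') (Fin d') ℂ))
    rw [conjTranspose_kronecker, conjTranspose_one] at hconj
    simpa [B, partialTraceLeft_conj_kronecker_one hUx] using
      le_card_nsmul_one_kronecker_partialTraceLeft hconj
  have hBtr : B.trace = ((d ^ 2 : ℝ) : ℂ) := by
    rw [trace_smul, trace_one_kronecker, trace_partialTraceLeft, hρtr, Fintype.card_fin,
      nsmul_eq_mul]
    push_cast
    ring
  have hsum := (Complex.le_def.mp (sum_trace_mul_le_trace_of_forall_le hB hTpsd hTsum)).1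
  rw [hBtr, Complex.re_sum, Complex.ofReal_re] at hsum
  calc (1 / N : ℝ) * _ ≤ 1 / N * (d : ℝ) ^ 2 := by gcongr
    _ = (d : ℝ) ^ 2 / N := one_div_mul_eq_div _ _

/-- For `N` unitary channels on `ℂ^d` and uniform inputs, the entanglement-assisted
distinguishability is at most `d²/N`: for every shared bipartite state `ρ_AB` on
`ℂ^d ⊗ ℂ^{d'}` and every POVM `{T_x}`, the average guessing probability
`(1/N) Σ_x Tr[(U_x ⊗ I) ρ_AB (U_x† ⊗ I) T_x]` is at most `d²/N`. -/
theorem stmt14 (d d' N : ℕ) (hd : 0 < d) (hd' : 0 < d') (hN : 0 < N)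
    (U : Fin N → Matrix (Fin d) (Fin d) ℂ)
    (hU : ∀ x, U x ∈ Matrix.unitaryGroup (Fin d) ℂ)
    (ρ : Matrix (Fin d × Fin d') (Fin d × Fin d') ℂ)
    (hρpsd : ρ.PosSemidef) (hρtr : ρ.trace = 1)
    (T : Fin N → Matrix (Fin d × Fin d') (Fin d × Fin d') ℂ)
    (hTpsd : ∀ x, (T x).PosSemidef) (hTsum : ∑ x, T x = 1) :
    (1 / N : ℝ) * ∑ x,
      ((((U x ⊗ₖ (1 : Matrix (Fin d') (Fin d') ℂ)) * ρ *
          ((U x)ᴴ ⊗ₖ (1 : Matrix (Fin d') (Fin d') ℂ))) * T x).trace).re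
      ≤ (d : ℝ) ^ 2 / N :=
  stmt14_general d d' N U hU ρ hρpsd hρtr T hTpsd hTsum
end

section
/- For two-outcome qubit measurements, the distinguishability (optimal guessing probability under prior {p_x}) of the ensemble of pure states {|ζ_x⟩}_{x=1}^N with weights {1/(2N)} plus the ensemble {|ζ_x^⊥⟩}_{x=1}^N with weights {1/(2N)} satisfies (1/2)·DS[{|ζ_x⟩},{1/N}] + (1/2)·DS[{|ζ_x^⊥⟩},{1/N}] = DS[{|ζ_x⟩},{1/N}]. -/
open Matrix BigOperators ComplexOrder

namespace Stmt17Aux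

noncomputable def Sy : Matrix (Fin 2) (Fin 2) ℂ := !![0, -Complex.I; Complex.I, 0]

lemma Sy_herm : Syᴴ = Sy := by
  ext i j
  fin_cases i <;> fin_cases j <;> simp [Sy]

lemma Sy_mul_Sy : Sy * Sy = 1 := by
  ext i j
  fin_cases i <;> fin_cases j <;>
    simp [Sy, Matrix.mul_apply, Fin.sum_univ_two, Complex.I_mul_I]

noncomputable def J (X : Matrix (Fin 2) (Fin 2) ℂ) : Matrix (Fin 2) (Fin 2) ℂ :=
  Sy * X.map (starRingEnd ℂ) * Sy

lemma J_apply (X : Matrix (Fin 2) (Fin 2) ℂ) :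
    J X = !![(starRingEnd ℂ) (X 1 1), -(starRingEnd ℂ) (X 1 0);
             -(starRingEnd ℂ) (X 0 1), (starRingEnd ℂ) (X 0 0)] := by
  ext i j
  fin_cases i <;> fin_cases j <;>
    simp [J, Sy, Matrix.mul_apply, Fin.sum_univ_two, Matrix.map_apply,
      Matrix.vecMul, dotProduct] <;>
    ring_nf <;>
    simp [Complex.I_sq, mul_comm]

lemma J_posSemidef {X : Matrix (Fin 2) (Fin 2) ℂ} (hX : X.PosSemidef) :
    (J X).PosSemidef := by
  have hmap : X.map (starRingEnd ℂ) = Xᵀ := by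
    ext i j
    have := congrFun (congrFun hX.1.eq j) i
    simpa [Matrix.conjTranspose_apply, Matrix.map_apply] using this
  have : J X = Sy * Xᵀ * Syᴴ := by rw [J, hmap, Sy_herm]
  rw [this]
  exact (hX.transpose).mul_mul_conjTranspose_same Sy

lemma map_star_sum {N : ℕ} (M : Fin N → Matrix (Fin 2) (Fin 2) ℂ) :
    (∑ x, M x).map (starRingEnd ℂ) = ∑ x, (M x).map (starRingEnd ℂ) := by
  ext i j
  simp [Matrix.map_apply, Matrix.sum_apply]

lemma J_sum {N : ℕ} (M : Fin N → Matrix (Fin 2) (Fin 2) ℂ) (hM : ∑ x, M x = 1) :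
    ∑ x, J (M x) = 1 := by
  have : ∑ x, J (M x) = Sy * ((∑ x, M x).map (starRingEnd ℂ)) * Sy := by
    rw [map_star_sum, Finset.mul_sum, Finset.sum_mul]
    rfl
  rw [this, hM]
  have h1 : (1 : Matrix (Fin 2) (Fin 2) ℂ).map (starRingEnd ℂ) = 1 :=
    Matrix.map_one _ (map_zero _) (map_one _)
  rw [h1, mul_one, Sy_mul_Sy]

lemma J_mul (X Y : Matrix (Fin 2) (Fin 2) ℂ) : J X * J Y = J (X * Y) := by
  rw [J, J, J, Matrix.map_mul]
  calc Sy * X.map (starRingEnd ℂ) * Sy * (Sy * Y.map (starRingEnd ℂ) * Sy)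
      = Sy * X.map (starRingEnd ℂ) * (Sy * Sy) * Y.map (starRingEnd ℂ) * Sy := by
        noncomm_ring
    _ = Sy * (X.map (starRingEnd ℂ) * Y.map (starRingEnd ℂ)) * Sy := by
        rw [Sy_mul_Sy, mul_one]; noncomm_ring

lemma trace_J (X : Matrix (Fin 2) (Fin 2) ℂ) : (J X).trace = star X.trace := by
  rw [J, Matrix.trace_mul_cycle, Sy_mul_Sy, one_mul]
  simp [Matrix.trace, Matrix.diag, Matrix.map_apply, ← map_sum]

open ComplexConjugate in
lemma rho_perp (ζ ζp : Fin 2 → ℂ)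
    (hζ : ∑ i, Complex.normSq (ζ i) = 1)
    (hζp : ∑ i, Complex.normSq (ζp i) = 1)
    (horth : ∑ i, (starRingEnd ℂ) (ζ i) * ζp i = 0) :
    Matrix.vecMulVec ζp (star ζp) = J (Matrix.vecMulVec ζ (star ζ)) := by
  set a := ζ 0 with ha
  set b := ζ 1 with hb
  set u := ζp 0 with hu
  set v := ζp 1 with hv
  have h1 : a * conj a + b * conj b = 1 := by
    rw [Complex.mul_conj, Complex.mul_conj]
    rw [Fin.sum_univ_two] at hζ
    exact_mod_cast hζ
  have h2 : u * conj u + v * conj v = 1 := by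
    rw [Complex.mul_conj, Complex.mul_conj]
    rw [Fin.sum_univ_two] at hζp
    exact_mod_cast hζp
  have h3 : conj a * u + conj b * v = 0 := by
    rw [Fin.sum_univ_two] at horth
    exact horth
  have h3c : a * conj u + b * conj v = 0 := by
    have := congrArg (starRingEnd ℂ) h3
    simpa [mul_comm] using this
  have E : a * conj a * (u * conj u) = b * conj b * (v * conj v) := by
    linear_combination (a * conj u) * h3 - (conj b * v) * h3c
  have d1 : u * conj u = b * conj b := by
    linear_combination E + (b * conj b) * h2 - (u * conj u) * h1
  have d2 : v * conj v = a * conj a := by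
    linear_combination h2 - h1 - d1
  have g01 : u * conj v = -(conj b * a) := by
    linear_combination (a * conj v) * h3 + (conj b * u) * h3c - (a * conj b) * d2
      - (a * conj b) * d1 - (u * conj v + a * conj b) * h1
  have g10 : v * conj u = -(conj a * b) := by
    have := congrArg (starRingEnd ℂ) g01
    simp only [RingHom.map_mul, map_neg, Complex.conj_conj] at this
    linear_combination this
  rw [J_apply]
  ext i j
  fin_cases i <;> fin_cases j <;>
    simp [Matrix.vecMulVec_apply, Pi.star_apply, Complex.star_def,
      ← ha, ← hb, ← hu, ← hv]
  · linear_combination d1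
  · linear_combination g01
  · linear_combination g10
  · linear_combination d2

lemma subsetLemma (N : ℕ) (ζ ζp : Fin N → Fin 2 → ℂ)
    (hζ : ∀ x, ∑ i, Complex.normSq (ζ x i) = 1)
    (hζp : ∀ x, ∑ i, Complex.normSq (ζp x i) = 1)
    (horth : ∀ x, ∑ i, (starRingEnd ℂ) (ζ x i) * ζp x i = 0) :
    {s : ℝ | ∃ M : Fin N → Matrix (Fin 2) (Fin 2) ℂ,
        (∀ x, (M x).PosSemidef) ∧ (∑ x, M x = 1) ∧
        s = ∑ x, (1 / N : ℝ) *
          ((Matrix.vecMulVec (ζ x) (star (ζ x)) * M x).trace).re} ⊆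
    {s : ℝ | ∃ M : Fin N → Matrix (Fin 2) (Fin 2) ℂ,
        (∀ x, (M x).PosSemidef) ∧ (∑ x, M x = 1) ∧
        s = ∑ x, (1 / N : ℝ) *
          ((Matrix.vecMulVec (ζp x) (star (ζp x)) * M x).trace).re} := by
  rintro s ⟨M, hpsd, hsum, rfl⟩
  refine ⟨fun x => J (M x), fun x => J_posSemidef (hpsd x), J_sum M hsum, ?_⟩
  refine Finset.sum_congr rfl fun x _ => ?_
  congr 1
  rw [rho_perp (ζ x) (ζp x) (hζ x) (hζp x) (horth x), J_mul, trace_J]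
  simp [Complex.star_def]

end Stmt17Aux

/-- `(1/2)·DS[{|ζ_x⟩},{1/N}] + (1/2)·DS[{|ζ_x^⊥⟩},{1/N}] = DS[{|ζ_x⟩},{1/N}]` for qubit
ensembles, where `DS` is the supremum over POVMs of the average guessing probability. -/
theorem stmt17 (N : ℕ) [NeZero N]
    (ζ ζp : Fin N → Fin 2 → ℂ)
    (hζ : ∀ x, ∑ i, Complex.normSq (ζ x i) = 1)
    (hζp : ∀ x, ∑ i, Complex.normSq (ζp x i) = 1)
    (horth : ∀ x, ∑ i, (starRingEnd ℂ) (ζ x i) * ζp x i = 0) :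
    (1 / 2 : ℝ) * sSup {s : ℝ | ∃ M : Fin N → Matrix (Fin 2) (Fin 2) ℂ,
        (∀ x, (M x).PosSemidef) ∧ (∑ x, M x = 1) ∧
        s = ∑ x, (1 / N : ℝ) *
          ((Matrix.vecMulVec (ζ x) (star (ζ x)) * M x).trace).re}
    + (1 / 2 : ℝ) * sSup {s : ℝ | ∃ M : Fin N → Matrix (Fin 2) (Fin 2) ℂ,
        (∀ x, (M x).PosSemidef) ∧ (∑ x, M x = 1) ∧
        s = ∑ x, (1 / N : ℝ) *
          ((Matrix.vecMulVec (ζp x) (star (ζp x)) * M x).trace).re}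
    = sSup {s : ℝ | ∃ M : Fin N → Matrix (Fin 2) (Fin 2) ℂ,
        (∀ x, (M x).PosSemidef) ∧ (∑ x, M x = 1) ∧
        s = ∑ x, (1 / N : ℝ) *
          ((Matrix.vecMulVec (ζ x) (star (ζ x)) * M x).trace).re} := by
  have horth' : ∀ x, ∑ i, (starRingEnd ℂ) (ζp x i) * ζ x i = 0 := by
    intro x
    have := congrArg (starRingEnd ℂ) (horth x)
    simpa [mul_comm] using this
  have hset :
      {s : ℝ | ∃ M : Fin N → Matrix (Fin 2) (Fin 2) ℂ,
        (∀ x, (M x).PosSemidef) ∧ (∑ x, M x = 1) ∧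
        s = ∑ x, (1 / N : ℝ) *
          ((Matrix.vecMulVec (ζp x) (star (ζp x)) * M x).trace).re}
      = {s : ℝ | ∃ M : Fin N → Matrix (Fin 2) (Fin 2) ℂ,
        (∀ x, (M x).PosSemidef) ∧ (∑ x, M x = 1) ∧
        s = ∑ x, (1 / N : ℝ) *
          ((Matrix.vecMulVec (ζ x) (star (ζ x)) * M x).trace).re} :=
    Set.Subset.antisymm
      (Stmt17Aux.subsetLemma N ζp ζ hζp hζ horth')
      (Stmt17Aux.subsetLemma N ζ ζp hζ hζp horth)
  rw [hset]
  ring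
end
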